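/- Let G be a finite group, χ a faithful primitive irreducible character of G, and N an abelian normal subgroup of G. Then N ≤ Z(G). -/

import Mathlib

open CategoryTheory

open scoped Classical in
/-- The character of `G` induced from a function `θ` on a subgroup `H`. -/
noncomputable def indChar {G : Type} [Group G] [Fintype G] (H : Subgroup G) (θ : ↥H → ℂ) :
    G → ℂ :=
  fun g => (Fintype.card H : ℂ)⁻¹ *
    ∑ x : G, if h : x * g * x⁻¹ ∈ H then θ ⟨x * g * x⁻¹, h⟩ else 0

/-- A character is primitive if it is not induced from a character of a proper subgroup. -/
def IsPrimitiveChar {G : Type} [Group G] [Fintype G] (χ : G → ℂ) : Prop :=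
  ∀ H : Subgroup G, H ≠ ⊤ → ∀ W : FDRep ℂ ↥H, χ ≠ indChar H W.character


/-!
`G` permutes the simultaneous eigenspaces ("weight spaces") of the abelian normal subgroup `N`
on `V`. Since `V` is irreducible, the weight spaces in the `G`-orbit of a nonzero one span `V`, so
`V` is the direct sum of the `G`-translates of a single weight space `V_χ`, and its character is
induced from the stabiliser of `χ` acting on `V_χ`. Primitivity forces this stabiliser to be all
of `G`, so `V = V_χ`: every element of `N` acts as a scalar, hence commutes with all of `ρ G`, and
faithfulness makes it central.
-/

open Module Set MulAction

namespace LinearMap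

variable {ι R M : Type*} [CommRing R] [AddCommGroup M] [Module R M] {N : ι → Submodule R M}
  [∀ i, Module.Finite R (N i)] [∀ i, Module.Free R (N i)]

lemma trace_eq_sum_trace_restrict_of_mapsTo [DecidableEq ι] [Fintype ι]
    (h : DirectSum.IsInternal N) (σ : ι → ι) {f : Module.End R M}
    (hf : ∀ i, MapsTo f (N i) (N (σ i))) :
    trace R M f = ∑ i,
      if hi : σ i = i then trace R (N i) (f.restrict fun _ hx ↦ hi ▸ hf i hx) else 0 := by
  let b : (i : ι) → Basis _ R (N i) := fun i ↦ Module.Free.chooseBasis R (N i)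
  rw [trace_eq_matrix_trace R (h.collectedBasis b), Matrix.trace, Fintype.sum_sigma]
  refine Finset.sum_congr rfl fun i _ ↦ ?_
  split_ifs with hi
  · rw [trace_eq_matrix_trace R (b i), Matrix.trace]
    refine Finset.sum_congr rfl fun k _ ↦ ?_
    simp [toMatrix_apply, h.collectedBasis_repr_of_mem _ (hi ▸ hf i (b i k).2), restrict_apply]
  · refine Finset.sum_eq_zero fun k _ ↦ ?_
    simp [toMatrix_apply, h.collectedBasis_repr_of_mem_ne _ hi (hf i (b i k).2)]

end LinearMap

namespace MulAction

variable {G X : Type*} [Group G] [MulAction G X]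

lemma conj_mem_stabilizer_iff {i : X} {x y : G} :
    y * x * y⁻¹ ∈ stabilizer G i ↔ x • y⁻¹ • i = y⁻¹ • i := by
  simp [mem_stabilizer_iff, mul_smul, smul_eq_iff_eq_inv_smul]

theorem sum_smul_eq_card_stabilizer_nsmul_sum {M : Type*} [AddCommMonoid M] [IsPretransitive G X]
    [Fintype G] [Fintype X] (x : X) (f : X → M) :
    ∑ g : G, f (g • x) = Nat.card (stabilizer G x) • ∑ y, f y := by
  classical
  rw [← Fintype.sum_fiberwise (fun g : G ↦ g • x), Finset.smul_sum]
  refine Fintype.sum_congr _ _ fun y ↦ ?_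
  obtain ⟨g₀, rfl⟩ := exists_smul_eq G x y
  have e : {g : G // g • x = g₀ • x} ≃ stabilizer G x :=
    { toFun g := ⟨g₀⁻¹ * g, by simp [mem_stabilizer_iff, mul_smul, g.2]⟩
      invFun s := ⟨g₀ * s, by rw [mul_smul, mem_stabilizer_iff.mp s.2]⟩
      left_inv g := by simp
      right_inv s := by simp }
  simp only [fun g : {g : G // g • x = g₀ • x} ↦ g.2, Finset.sum_const, Finset.card_univ,
    ← Nat.card_eq_fintype_card, Nat.card_congr e]

end MulAction

/-- `G` permutes the functions on a normal subgroup `N` by `(g • χ) n = χ (g⁻¹ n g)`. -/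
abbrev Subgroup.conjFunAction {G : Type*} [Group G] (N : Subgroup G) [N.Normal] (α : Type*) :
    MulAction G (N → α) where
  smul g χ n := χ ((MulAut.conjNormal g)⁻¹ n)
  one_smul χ := funext fun n ↦ show χ ((MulAut.conjNormal 1)⁻¹ n) = χ n by simp
  mul_smul g h χ := funext fun n ↦
    show χ ((MulAut.conjNormal (g * h))⁻¹ n) =
      χ ((MulAut.conjNormal h)⁻¹ ((MulAut.conjNormal g)⁻¹ n)) by simp

attribute [local instance] Subgroup.conjFunAction

namespace Representation

variable {k G V : Type*} [Field k] [Group G] [AddCommGroup V] [Module k V]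
  (ρ : Representation k G V)

lemma trace_restrict_conj {p q : Submodule k V} {x y : G} (hx : MapsTo (ρ x) p p)
    (hyx : MapsTo (ρ (y * x * y⁻¹)) q q) (hy : MapsTo (ρ y) p q)
    (hy' : MapsTo (ρ y⁻¹) q p) :
    LinearMap.trace k q ((ρ (y * x * y⁻¹)).restrict hyx) =
      LinearMap.trace k p ((ρ x).restrict hx) := by
  let e : p ≃ₗ[k] q := .ofLinearMap ((ρ y).restrict hy) ((ρ y⁻¹).restrict hy')
    (LinearMap.ext fun v ↦ Subtype.ext (ρ.self_inv_apply y v))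
    (LinearMap.ext fun v ↦ Subtype.ext (ρ.inv_self_apply y v))
  have : (ρ (y * x * y⁻¹)).restrict hyx = e.conj ((ρ x).restrict hx) := by
    ext v
    change ρ (y * x * y⁻¹) v = ρ y (ρ x (ρ y⁻¹ v))
    simp [map_mul]
  rw [this, LinearMap.trace_conj']

lemma isSemisimple_apply [Fintype G] [NeZero (Fintype.card G : k)] (g : G) :
    Module.End.IsSemisimple (ρ g) := by
  have hsq : Squarefree (Polynomial.X ^ Fintype.card G - Polynomial.C (1 : k)) :=
    (Polynomial.separable_X_pow_sub_C 1 (NeZero.ne _) one_ne_zero).squarefree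
  refine Module.End.isSemisimple_of_squarefree_aeval_eq_zero hsq ?_
  rw [map_sub, Polynomial.aeval_X_pow, ← map_pow, pow_card_eq_one, map_one, Polynomial.aeval_C,
    map_one, sub_self]

variable (N : Subgroup G)

def weightSpace (χ : N → k) : Submodule k V :=
  ⨅ n : N, Module.End.eigenspace (ρ n) (χ n)

variable {ρ N} in
lemma mem_weightSpace {χ : N → k} {v : V} :
    v ∈ ρ.weightSpace N χ ↔ ∀ n : N, ρ n v = χ n • v := by
  simp [weightSpace]

lemma mapsTo_weightSpace [N.Normal] (g : G) (χ : N → k) :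
    MapsTo (ρ g) (ρ.weightSpace N χ) (ρ.weightSpace N (g • χ)) := by
  intro v hv
  rw [SetLike.mem_coe, mem_weightSpace] at hv ⊢
  intro n
  have hn : (n : G) * g = g * ((MulAut.conjNormal g)⁻¹ n : N) := by
    simp [mul_assoc]
  rw [← Module.End.mul_apply, ← map_mul, hn, map_mul, Module.End.mul_apply, hv, map_smul]
  rfl

variable {N}

lemma iSupIndep_weightSpace (hN : ∀ a ∈ N, ∀ b ∈ N, a * b = b * a) :
    iSupIndep (ρ.weightSpace N) :=
  (Module.End.independent_iInf_maxGenEigenspace_of_forall_mapsTo (fun n : N ↦ ρ n)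
    fun m n μ ↦ Module.End.mapsTo_maxGenEigenspace_of_comm
      (Commute.map (hN _ n.2 _ m.2) ρ) μ).mono fun _ ↦
        iInf_mono fun _ ↦ Module.End.eigenspace_le_maxGenEigenspace

section Finite

variable [IsAlgClosed k] [FiniteDimensional k V] [Fintype G] [NeZero (Fintype.card G : k)]

lemma iSup_weightSpace_eq_top (hN : ∀ a ∈ N, ∀ b ∈ N, a * b = b * a) :
    ⨆ χ, ρ.weightSpace N χ = ⊤ := by
  have hsemi (n : N) := (ρ.isSemisimple_apply n).isFinitelySemisimple
  simp_rw [weightSpace, ← (hsemi _).maxGenEigenspace_eq_eigenspace]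
  exact Module.End.iSup_iInf_maxGenEigenspace_eq_top_of_iSup_maxGenEigenspace_eq_top_of_commute
    _ (fun m n _ ↦ Commute.map (hN _ m.2 _ n.2) ρ)
    fun n ↦ Module.End.iSup_maxGenEigenspace_eq_top _

lemma exists_weightSpace_ne_bot [Nontrivial V] (hN : ∀ a ∈ N, ∀ b ∈ N, a * b = b * a) :
    ∃ χ, ρ.weightSpace N χ ≠ ⊥ := by
  by_contra! h
  have := ρ.iSup_weightSpace_eq_top hN
  simp only [h, iSup_bot] at this
  exact bot_ne_top this

end Finite

end Representation

namespace FDRep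

universe u v

section Field

variable {k : Type u} {G : Type v} [Field k] [Group G] (V : FDRep k G)

lemma nontrivial_of_simple [Simple V] : Nontrivial V := by
  refine not_subsingleton_iff_nontrivial.mp fun h ↦ id_nonzero V ?_
  ext v
  exact Subsingleton.elim (α := V) _ _

lemma eq_bot_or_eq_top_of_mapsTo [Simple V] (p : Submodule k V)
    (hp : ∀ g, MapsTo (V.ρ g) p p) : p = ⊥ ∨ p = ⊤ := by
  refine or_iff_not_imp_left.mpr fun hp₀ ↦ ?_
  let ι : FDRep.of (Subrepresentation.toRepresentation ⟨p, fun g _ hv ↦ hp g hv⟩) ⟶ V :=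
    ⟨FGModuleCat.ofHom p.subtype, fun g ↦ rfl⟩
  have : Mono ι := by
    apply Functor.mono_of_mono_map (Action.forget (FGModuleCat k) G)
    apply Functor.mono_of_mono_map (forget₂ (FGModuleCat k) (ModuleCat k))
    exact (ModuleCat.mono_iff_injective _).mpr p.injective_subtype
  obtain ⟨x, hxp, hx₀⟩ := Submodule.exists_mem_ne_zero_of_ne_bot hp₀
  have : IsIso ι := isIso_of_mono_of_nonzero fun h ↦ hx₀ congr(($h).hom ⟨x, hxp⟩)
  refine Submodule.eq_top_iff'.mpr fun v ↦ ?_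
  rw [← show ι.hom ((inv ι).hom v) = v from congr(($(IsIso.inv_hom_id ι)).hom v)]
  exact ((inv ι).hom v).2

noncomputable def restrict (H : Subgroup G) (W : Submodule k V)
    (hW : ∀ h ∈ H, MapsTo (V.ρ h) W W) : FDRep k H :=
  FDRep.of (Subrepresentation.toRepresentation (ρ := V.ρ.comp H.subtype)
    ⟨W, fun h _ hv ↦ hW h h.2 hv⟩)

lemma character_restrict (H : Subgroup G) (W : Submodule k V)
    (hW : ∀ h ∈ H, MapsTo (V.ρ h) W W) (h : H) :
    (V.restrict H W hW).character h = LinearMap.trace k W ((V.ρ h).restrict (hW h h.2)) :=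
  rfl

lemma mapsTo_of_mem_stabilizer {ι : Type*} [MulAction G ι] {W : ι → Submodule k V}
    (hρW : ∀ (g : G) i, MapsTo (V.ρ g) (W i) (W (g • i))) (i : ι) :
    ∀ h ∈ stabilizer G i, MapsTo (V.ρ h) (W i) (W i) := by
  intro h hh
  simpa [mem_stabilizer_iff.mp hh] using hρW h i

lemma isInternal_weightSpace_orbit [Simple V] {N : Subgroup G} [N.Normal]
    (hN : ∀ a ∈ N, ∀ b ∈ N, a * b = b * a) {χ : N → k} [DecidableEq (orbit G χ)]
    (hχ : Representation.weightSpace V.ρ N χ ≠ ⊥) :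
    DirectSum.IsInternal fun ψ : orbit G χ ↦ Representation.weightSpace V.ρ N ψ := by
  set W := fun ψ : orbit G χ ↦ Representation.weightSpace V.ρ N ψ
  refine (DirectSum.isInternal_submodule_iff_iSupIndep_and_iSup_eq_top W).mpr
    ⟨(Representation.iSupIndep_weightSpace V.ρ hN).comp Subtype.val_injective, ?_⟩
  refine (V.eq_bot_or_eq_top_of_mapsTo _ fun g ↦ ?_).resolve_left
    fun h ↦ hχ (eq_bot_iff.mpr ?_)
  · change iSup W ≤ (iSup W).comap (V.ρ g)
    rw [← Submodule.map_le_iff_le_comap, Submodule.map_iSup]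
    exact iSup_le fun ψ ↦ (Submodule.map_le_iff_le_comap.mpr
      (Representation.mapsTo_weightSpace V.ρ N g ψ)).trans (le_iSup W (g • ψ))
  · exact h ▸ le_iSup W ⟨χ, mem_orbit_self χ⟩

end Field

variable {G : Type} [Group G] [Fintype G] (V : FDRep ℂ G)

theorem character_eq_indChar_of_isInternal {ι : Type*} [DecidableEq ι] [MulAction G ι]
    [IsPretransitive G ι] {W : ι → Submodule ℂ V} (hW : DirectSum.IsInternal W)
    (hρW : ∀ (g : G) i, MapsTo (V.ρ g) (W i) (W (g • i))) (i : ι) :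
    V.character = indChar (stabilizer G i)
      (V.restrict (stabilizer G i) (W i) (V.mapsTo_of_mem_stabilizer hρW i)).character := by
  have := Finite.of_surjective _ (exists_smul_eq G i)
  have := Fintype.ofFinite ι
  funext x
  let F : ι → ℂ := fun j ↦ if hj : x • j = j then
    LinearMap.trace ℂ (W j) ((V.ρ x).restrict fun _ hv ↦ hj ▸ hρW x j hv) else 0
  have hterm (y : G) [Decidable (y * x * y⁻¹ ∈ stabilizer G i)] :
      (if h : y * x * y⁻¹ ∈ stabilizer G i then
        (V.restrict (stabilizer G i) (W i) (V.mapsTo_of_mem_stabilizer hρW i)).character ⟨_, h⟩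
      else 0) = F (y⁻¹ • i) := by
    by_cases h : y * x * y⁻¹ ∈ stabilizer G i
    · rw [dif_pos h, character_restrict]
      dsimp only [F]
      rw [dif_pos (conj_mem_stabilizer_iff.mp h)]
      refine Representation.trace_restrict_conj V.ρ _ _ ?_ (hρW y⁻¹ i)
      simpa using hρW y (y⁻¹ • i)
    · rw [dif_neg h]
      dsimp only [F]
      rw [dif_neg (mt conj_mem_stabilizer_iff.mpr h)]
  have hinv : ∑ y : G, F (y⁻¹ • i) = ∑ y : G, F (y • i) :=
    Fintype.sum_equiv (Equiv.inv G) _ _ fun _ ↦ rfl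
  simp only [indChar, hterm]
  rw [hinv, sum_smul_eq_card_stabilizer_nsmul_sum, Fintype.card_eq_nat_card, nsmul_eq_mul,
    ← mul_assoc, inv_mul_cancel₀ (Nat.cast_ne_zero.mpr Nat.card_pos.ne'), one_mul]
  exact LinearMap.trace_eq_sum_trace_restrict_of_mapsTo hW (x • ·) (hρW x)

theorem exists_weightSpace_eq_top [Simple V] (hprim : IsPrimitiveChar V.character)
    {N : Subgroup G} [N.Normal] (hN : ∀ a ∈ N, ∀ b ∈ N, a * b = b * a) :
    ∃ χ, Representation.weightSpace V.ρ N χ = ⊤ := by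
  classical
  have := V.nontrivial_of_simple
  obtain ⟨χ, hχ⟩ := Representation.exists_weightSpace_ne_bot V.ρ hN
  refine ⟨χ, ?_⟩
  let i : orbit G χ := ⟨χ, mem_orbit_self χ⟩
  by_cases hstab : stabilizer G i = ⊤
  · refine (V.eq_bot_or_eq_top_of_mapsTo _ fun g ↦ ?_).resolve_left hχ
    have hg : g ∈ stabilizer G i := hstab ▸ Subgroup.mem_top g
    replace hg : g • χ = χ := congrArg Subtype.val hg
    simpa [hg] using Representation.mapsTo_weightSpace V.ρ N g χ
  · exact absurd (V.character_eq_indChar_of_isInternal (V.isInternal_weightSpace_orbit hN hχ)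
      (fun g ψ ↦ Representation.mapsTo_weightSpace V.ρ N g ψ) i) (hprim _ hstab _)

end FDRep

/-- If `G` has a faithful primitive irreducible character, then every abelian normal
subgroup of `G` is central. -/
theorem abelian_normal_le_center (G : Type) [Group G] [Fintype G]
    (V : FDRep ℂ G) [Simple V]
    (hfaith : ∀ g : G, V.character g = V.character 1 → g = 1)
    (hprim : IsPrimitiveChar V.character)
    (N : Subgroup G) [N.Normal]
    (hab : ∀ a ∈ N, ∀ b ∈ N, a * b = b * a) :
    N ≤ Subgroup.center G := by
  obtain ⟨χ, hχ⟩ := V.exists_weightSpace_eq_top hprim hab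
  have hρ : Function.Injective V.ρ := (injective_iff_map_eq_one V.ρ).mpr fun g hg ↦
    hfaith g (by simp [FDRep.character, hg])
  intro n hn
  have hscalar : V.ρ n = χ ⟨n, hn⟩ • 1 := LinearMap.ext fun v ↦
    Representation.mem_weightSpace.mp (hχ ▸ Submodule.mem_top : v ∈ _) ⟨n, hn⟩
  refine Subgroup.mem_center_iff.mpr fun g ↦ hρ ?_
  rw [map_mul, map_mul, hscalar, smul_mul_assoc, mul_smul_comm, one_mul, mul_one]
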